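/- Let P₀ be a set of primes, x real, and A ⊆ [1, x] a finite set of integers with |A| = k ≥ 2, occupying ν(p) residue classes modulo each prime p. If y ≥ 10 and ∑_{y/2 < p ≤ y, p ∈ P₀} log p ≥ 8k·log x, then ∑_{y/2 < p ≤ y, p ∈ P₀} ν(p)/p ≥ (k/2) · ∑_{y/2 < p ≤ y, p ∈ P₀} 1/p. -/

import Mathlib

open scoped Classical

/-!
In a residue class mod `p` holding `m` elements of `A`, the loss `m - 1` is at most the number
`m (m - 1)` of ordered pairs of distinct elements in it; hence `k - ν(p)` is at most the number of
ordered pairs `(a, b)`, `a ≠ b`, with `p ∣ b - a`. A nonzero `b - a` with `|b - a| ≤ x` has at most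
`log x / log (y / 2)` prime factors exceeding `y / 2`, so the total number `T` of such (pair, prime)
incidences satisfies `T log (y / 2) ≤ k² log x`. For the set `S` of primes summed over,
`8 k log x ≤ |S| log y`, and `log y ≤ 2 log (y / 2)` for `y ≥ 4`, whence `4 T ≤ k |S|`. Since
`1 / p < 2 / y` and `|S| / y ≤ ∑ 1 / p`, `∑ (k - ν(p)) / p ≤ 2 T / y ≤ (k / 2) ∑ 1 / p`.
-/

open Finset Real

theorem Finset.card_le_card_image_add_card_filter_offDiag {α β : Type*} [DecidableEq α]
    [DecidableEq β] (s : Finset α) (f : α → β) :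
    #s ≤ #(s.image f) + #{q ∈ s.offDiag | f q.1 = f q.2} := by
  have hfiber (b : β) :
      #{a ∈ s | f a = b} ≤ 1 + #{q ∈ s.offDiag | f q.1 = f q.2 ∧ f q.1 = b} := by
    have hsub : {a ∈ s | f a = b}.offDiag ⊆ {q ∈ s.offDiag | f q.1 = f q.2 ∧ f q.1 = b} := by
      intro q hq
      simp only [mem_offDiag, mem_filter] at hq ⊢
      exact ⟨⟨hq.1.1, hq.2.1.1, hq.2.2⟩, hq.1.2.trans hq.2.1.2.symm, hq.1.2⟩
    refine le_trans ?_ (Nat.add_le_add_left (card_le_card hsub) 1)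
    rw [offDiag_card]
    rcases #{a ∈ s | f a = b} with _ | m
    · simp
    · have : m + (m + 1) ≤ (m + 1) * (m + 1) := by nlinarith
      omega
  calc #s = ∑ b ∈ s.image f, #{a ∈ s | f a = b} := card_eq_sum_card_image f s
    _ ≤ ∑ b ∈ s.image f, (1 + #{q ∈ s.offDiag | f q.1 = f q.2 ∧ f q.1 = b}) :=
      sum_le_sum fun b _ => hfiber b
    _ = #(s.image f) + #{q ∈ s.offDiag | f q.1 = f q.2} := by
      rw [sum_add_distrib, card_eq_sum_ones (s.image f)]
      congr 1
      rw [card_eq_sum_card_fiberwise (f := fun q => f q.1) (t := s.image f)]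
      · simp only [filter_filter]
      · intro q hq
        simp only [coe_filter, mem_offDiag] at hq
        exact mem_coe.2 (mem_image_of_mem f hq.1.1)

theorem pow_card_le_of_forall_prime_dvd {S : Finset ℕ} {n : ℕ} {z : ℝ} (hz : 0 ≤ z) (hn : n ≠ 0)
    (hS : ∀ p ∈ S, p.Prime ∧ p ∣ n ∧ z ≤ p) : z ^ #S ≤ n := by
  have hprod : ∏ p ∈ S, p ≤ n :=
    Nat.le_of_dvd (Nat.pos_of_ne_zero hn)
      (prod_primes_dvd n (fun p hp => (hS p hp).1.prime) fun p hp => (hS p hp).2.1)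
  calc z ^ #S = ∏ _p ∈ S, z := (prod_const z).symm
    _ ≤ ∏ p ∈ S, (p : ℝ) := prod_le_prod (fun _ _ => hz) fun p hp => (hS p hp).2.2
    _ ≤ n := by rw [← Nat.cast_prod]; exact_mod_cast hprod

theorem card_filter_dvd_mul_log_le {S : Finset ℕ} {z x : ℝ} (hz : 0 < z)
    (hS : ∀ p ∈ S, p.Prime ∧ z ≤ p) {d : ℤ} (hd : d ≠ 0) (hdx : |(d : ℝ)| ≤ x) :
    #(S.filter fun p : ℕ => (p : ℤ) ∣ d) * log z ≤ log x := by
  have hpow : z ^ #(S.filter fun p : ℕ => (p : ℤ) ∣ d) ≤ d.natAbs := by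
    refine pow_card_le_of_forall_prime_dvd hz.le (Int.natAbs_ne_zero.2 hd) fun p hp => ?_
    rw [mem_filter] at hp
    exact ⟨(hS p hp.1).1, Int.natCast_dvd.1 hp.2, (hS p hp.1).2⟩
  rw [← log_pow]
  refine log_le_log (by positivity) (hpow.trans ?_)
  rwa [Nat.cast_natAbs, Int.cast_abs]

def residueCount (A : Finset ℤ) (p : ℕ) : ℕ := #(A.image fun a => a % (p : ℤ))

def collisionCount (A : Finset ℤ) (p : ℕ) : ℕ := #{q ∈ A.offDiag | q.1 ≡ q.2 [ZMOD p]}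

theorem card_le_residueCount_add_collisionCount (A : Finset ℤ) (p : ℕ) :
    #A ≤ residueCount A p + collisionCount A p :=
  card_le_card_image_add_card_filter_offDiag A _

theorem sum_collisionCount_mul_log_le {S : Finset ℕ} {A : Finset ℤ} {z x : ℝ} (hz : 0 < z)
    (hS : ∀ p ∈ S, p.Prime ∧ z ≤ p) (hA : ∀ a ∈ A, 1 ≤ a ∧ (a : ℝ) ≤ x) :
    (∑ p ∈ S, collisionCount A p : ℝ) * log z ≤ #A.offDiag * log x := by
  have hswap : ∑ p ∈ S, collisionCount A p =
      ∑ q ∈ A.offDiag, #(S.filter fun p : ℕ => (p : ℤ) ∣ q.2 - q.1) := by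
    simp only [collisionCount, Int.modEq_iff_dvd]
    exact sum_card_bipartiteAbove_eq_sum_card_bipartiteBelow _
  rw [← Nat.cast_sum, hswap, Nat.cast_sum, sum_mul, ← nsmul_eq_mul, ← sum_const]
  refine sum_le_sum fun q hq => card_filter_dvd_mul_log_le hz hS ?_ ?_
  all_goals obtain ⟨hq₁, hq₂, hne⟩ := mem_offDiag.1 hq
  · exact sub_ne_zero.2 (Ne.symm hne)
  · have h₁ := hA _ hq₁
    have h₂ := hA _ hq₂
    have h₁' : (1 : ℝ) ≤ q.1 := by exact_mod_cast h₁.1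
    have h₂' : (1 : ℝ) ≤ q.2 := by exact_mod_cast h₂.1
    rw [Int.cast_sub, abs_le]
    constructor <;> linarith [h₁.2, h₂.2]

theorem four_mul_sum_collisionCount_le {S : Finset ℕ} {A : Finset ℤ} {x y : ℝ} (hy : 4 ≤ y)
    (hS : ∀ p ∈ S, p.Prime ∧ y / 2 < p ∧ (p : ℝ) ≤ y) (hA : ∀ a ∈ A, 1 ≤ a ∧ (a : ℝ) ≤ x)
    (hx : 0 ≤ log x) (hlog : 8 * #A * log x ≤ ∑ p ∈ S, log p) :
    4 * ∑ p ∈ S, (collisionCount A p : ℝ) ≤ #A * #S := by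
  set T := ∑ p ∈ S, (collisionCount A p : ℝ)
  have hlog_half : 0 < log (y / 2) := log_pos (by linarith)
  have hT : T * log (y / 2) ≤ #A ^ 2 * log x := by
    have hS' : ∀ p ∈ S, p.Prime ∧ y / 2 ≤ p := fun p hp => ⟨(hS p hp).1, (hS p hp).2.1.le⟩
    refine (sum_collisionCount_mul_log_le (by linarith) hS' hA).trans
      (mul_le_mul_of_nonneg_right ?_ hx)
    rw [offDiag_card]
    exact_mod_cast (Nat.sub_le _ _).trans (sq _).ge
  have hS_log : 8 * #A * log x ≤ #S * log y := by
    calc 8 * #A * log x ≤ ∑ p ∈ S, log p := hlog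
      _ ≤ ∑ _p ∈ S, log y :=
        sum_le_sum fun p hp => log_le_log (by linarith [(hS p hp).2.1]) (hS p hp).2.2
      _ = #S * log y := by rw [sum_const, nsmul_eq_mul]
  have hlog_y : log y ≤ 2 * log (y / 2) := by
    calc log y ≤ log ((y / 2) ^ 2) := log_le_log (by linarith) (by nlinarith)
      _ = 2 * log (y / 2) := by rw [log_pow]; norm_num
  have hA0 : (0 : ℝ) ≤ #A := Nat.cast_nonneg _
  have hS0 : (0 : ℝ) ≤ #S := Nat.cast_nonneg _
  refine le_of_mul_le_mul_right ?_ hlog_half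
  nlinarith [mul_le_mul_of_nonneg_left hS_log hA0,
    mul_le_mul_of_nonneg_left hlog_y (mul_nonneg hA0 hS0)]

theorem card_div_two_mul_sum_inv_le_sum_residueCount_div {S : Finset ℕ} {A : Finset ℤ}
    {x y : ℝ} (hy : 4 ≤ y) (hS : ∀ p ∈ S, p.Prime ∧ y / 2 < p ∧ (p : ℝ) ≤ y)
    (hA : ∀ a ∈ A, 1 ≤ a ∧ (a : ℝ) ≤ x) (hlog : 8 * #A * log x ≤ ∑ p ∈ S, log p) :
    (#A / 2 : ℝ) * ∑ p ∈ S, 1 / (p : ℝ) ≤ ∑ p ∈ S, (residueCount A p : ℝ) / p := by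
  obtain rfl | ⟨a, ha⟩ := A.eq_empty_or_nonempty
  · simp [residueCount]
  have ha₁ : (1 : ℝ) ≤ a := by exact_mod_cast (hA a ha).1
  have hx : 0 ≤ log x := log_nonneg (ha₁.trans (hA a ha).2)
  have hT := four_mul_sum_collisionCount_le hy hS hA hx hlog
  have hp_pos : ∀ p ∈ S, (0 : ℝ) < p := fun p hp => by linarith [(hS p hp).2.1]
  have hS_inv : #S / y ≤ ∑ p ∈ S, 1 / (p : ℝ) := by
    calc (#S / y : ℝ) = ∑ _p ∈ S, 1 / y := by rw [sum_const, nsmul_eq_mul]; ring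
      _ ≤ ∑ p ∈ S, 1 / (p : ℝ) :=
        sum_le_sum fun p hp => one_div_le_one_div_of_le (hp_pos p hp) (hS p hp).2.2
  have hcoll : ∑ p ∈ S, (collisionCount A p : ℝ) / p ≤
      2 / y * ∑ p ∈ S, (collisionCount A p : ℝ) := by
    rw [mul_sum]
    refine sum_le_sum fun p hp => ?_
    calc (collisionCount A p : ℝ) / p ≤ collisionCount A p / (y / 2) :=
          div_le_div_of_nonneg_left (Nat.cast_nonneg _) (by positivity) (hS p hp).2.1.le
      _ = 2 / y * collisionCount A p := by ring
  calc (#A / 2 : ℝ) * ∑ p ∈ S, 1 / (p : ℝ)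
      = #A * ∑ p ∈ S, 1 / (p : ℝ) - #A / 2 * ∑ p ∈ S, 1 / (p : ℝ) := by ring
    _ ≤ #A * ∑ p ∈ S, 1 / (p : ℝ) - ∑ p ∈ S, (collisionCount A p : ℝ) / p := by
      gcongr
      calc ∑ p ∈ S, (collisionCount A p : ℝ) / p
          ≤ 2 / y * ∑ p ∈ S, (collisionCount A p : ℝ) := hcoll
        _ = (4 * ∑ p ∈ S, (collisionCount A p : ℝ)) * (1 / (2 * y)) := by ring
        _ ≤ #A * #S * (1 / (2 * y)) := by gcongr
        _ = #A / 2 * (#S / y) := by ring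
        _ ≤ #A / 2 * ∑ p ∈ S, 1 / (p : ℝ) := by gcongr
    _ ≤ ∑ p ∈ S, (residueCount A p : ℝ) / p := by
      rw [mul_sum, ← sum_sub_distrib]
      refine sum_le_sum fun p hp => ?_
      have : (#A : ℝ) ≤ residueCount A p + collisionCount A p := by
        exact_mod_cast card_le_residueCount_add_collisionCount A p
      rw [mul_one_div, ← sub_div]
      gcongr
      linarith

theorem stmt_5_general (P₀ : Set ℕ)
    (x : ℝ) (A : Finset ℤ) (hAx : ∀ a ∈ A, 1 ≤ a ∧ (a : ℝ) ≤ x)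
    (k : ℕ) (hk : A.card = k)
    (y : ℝ) (hy : 10 ≤ y)
    (hlog : ∑ p ∈ (Finset.range (⌊y⌋₊ + 1)).filter
        (fun p => Nat.Prime p ∧ p ∈ P₀ ∧ y / 2 < (p : ℝ)),
        Real.log p ≥ 8 * (k : ℝ) * Real.log x) :
    ∑ p ∈ (Finset.range (⌊y⌋₊ + 1)).filter
        (fun p => Nat.Prime p ∧ p ∈ P₀ ∧ y / 2 < (p : ℝ)),
      ((A.image (fun a => a % (p : ℤ))).card : ℝ) / p ≥
    ((k : ℝ) / 2) * ∑ p ∈ (Finset.range (⌊y⌋₊ + 1)).filter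
        (fun p => Nat.Prime p ∧ p ∈ P₀ ∧ y / 2 < (p : ℝ)), (1 : ℝ) / p := by
  subst hk
  have hS : ∀ p ∈ (range (⌊y⌋₊ + 1)).filter (fun p => p.Prime ∧ p ∈ P₀ ∧ y / 2 < (p : ℝ)),
      p.Prime ∧ y / 2 < p ∧ (p : ℝ) ≤ y := by
    intro p hp
    obtain ⟨hp_range, hp_prime, -, hp_gt⟩ := mem_filter.1 hp
    have hp_le : p ≤ ⌊y⌋₊ := Nat.lt_succ_iff.1 (mem_range.1 hp_range)
    exact ⟨hp_prime, hp_gt, (Nat.le_floor_iff (by linarith)).1 hp_le⟩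
  exact card_div_two_mul_sum_inv_le_sum_residueCount_div (by linarith) hS hAx hlog

theorem stmt_5 (P₀ : Set ℕ) (hP₀ : ∀ p ∈ P₀, Nat.Prime p)
    (x : ℝ) (A : Finset ℤ) (hAx : ∀ a ∈ A, 1 ≤ a ∧ (a : ℝ) ≤ x)
    (k : ℕ) (hk : A.card = k) (hk2 : 2 ≤ k)
    (y : ℝ) (hy : 10 ≤ y)
    (hlog : ∑ p ∈ (Finset.range (⌊y⌋₊ + 1)).filter
        (fun p => Nat.Prime p ∧ p ∈ P₀ ∧ y / 2 < (p : ℝ)),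
        Real.log p ≥ 8 * (k : ℝ) * Real.log x) :
    ∑ p ∈ (Finset.range (⌊y⌋₊ + 1)).filter
        (fun p => Nat.Prime p ∧ p ∈ P₀ ∧ y / 2 < (p : ℝ)),
      ((A.image (fun a => a % (p : ℤ))).card : ℝ) / p ≥
    ((k : ℝ) / 2) * ∑ p ∈ (Finset.range (⌊y⌋₊ + 1)).filter
        (fun p => Nat.Prime p ∧ p ∈ P₀ ∧ y / 2 < (p : ℝ)), (1 : ℝ) / p :=
  stmt_5_general P₀ x A hAx k hk y hy hlog
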